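/- If G has a spanning complete bipartite subgraph K_{δ, n−δ} whose part of size n − δ is independent in G (equivalently, G is the join of an independent set of size n − δ with an arbitrary graph on δ vertices), where δ = δ(G) and n = n(G), then γᵢ(G) = n − δ. -/

import Mathlib

open Finset

open scoped Classical

noncomputable section

namespace IndicatedDom

variable {V : Type*} [Fintype V]

/-- Closed neighborhood `N[v]` as a `Finset`. -/
def cnbhd (G : SimpleGraph V) (v : V) : Finset V :=
  insert v (G.neighborFinset v)

/-- `D` is a dominating set of `G`. -/
def Dominates (G : SimpleGraph V) (D : Finset V) : Prop :=
  ∀ u, ∃ v ∈ D, u ∈ cnbhd G v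

/-- The set of vertices not dominated by `D`. -/
def undom (G : SimpleGraph V) (D : Finset V) : Finset V :=
  univ.filter fun u => ∀ v ∈ D, u ∉ cnbhd G v

/-- Game value of the indicated domination game with a fuel parameter:
given the set `D` of vertices selected so far, Dominator indicates an
undominated vertex `u` (minimizing), Staller selects a vertex of `N[u]`
(maximizing); each selection counts one. -/
def giAux (G : SimpleGraph V) : ℕ → Finset V → ℕ
  | 0, _ => 0
  | (fuel+1), D =>
    if h : (undom G D).Nonempty then
      (undom G D).inf' h fun u =>
        (cnbhd G u).sup' ⟨u, Finset.mem_insert_self u _⟩ fun v => giAux G fuel (insert v D) + 1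
    else 0

/-- The indicated domination number `γᵢ(G)`. -/
def indicatedDomNum (G : SimpleGraph V) : ℕ :=
  giAux G (Fintype.card V) ∅

/-- Game value of the standard domination game with a fuel parameter:
`dom = true` means it is Dominator's turn (minimizing); legal moves are
vertices dominating at least one new vertex. -/
def gameAux (G : SimpleGraph V) : ℕ → Bool → Finset V → ℕ
  | 0, _, _ => 0
  | (fuel+1), dom, D =>
    if h : (univ.filter fun v => ∃ u ∈ cnbhd G v, u ∈ undom G D).Nonempty then
      if dom then
        (univ.filter fun v => ∃ u ∈ cnbhd G v, u ∈ undom G D).inf' h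
          fun v => gameAux G fuel false (insert v D) + 1
      else
        (univ.filter fun v => ∃ u ∈ cnbhd G v, u ∈ undom G D).sup' h
          fun v => gameAux G fuel true (insert v D) + 1
    else 0

/-- The game domination number `γ_g(G)` (Dominator starts). -/
def gameDomNum (G : SimpleGraph V) : ℕ :=
  gameAux G (Fintype.card V) true ∅

/-- A minimal dominating set. -/
def IsMinimalDominating (G : SimpleGraph V) (D : Finset V) : Prop :=
  Dominates G D ∧ ∀ D' ⊂ D, ¬ Dominates G D'

/-- The upper domination number `Γ(G)`. -/
def upperDomNum (G : SimpleGraph V) : ℕ :=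
  sSup {k | ∃ D : Finset V, IsMinimalDominating G D ∧ D.card = k}

/-- A dominating (Grundy) sequence: every vertex dominates something new,
and the whole sequence dominates `G`. -/
def IsDominatingSeq (G : SimpleGraph V) (l : List V) : Prop :=
  (∀ i : Fin l.length, ∃ u, u ∈ cnbhd G (l.get i) ∧
      ∀ j : Fin l.length, (j : ℕ) < (i : ℕ) → u ∉ cnbhd G (l.get j)) ∧
    Dominates G l.toFinset

/-- The Grundy domination number `γ_gr(G)`. -/
def grundyDomNum (G : SimpleGraph V) : ℕ :=
  sSup {k | ∃ l : List V, IsDominatingSeq G l ∧ l.length = k}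

/-- The independence number `α(G)`. -/
def indepNum (G : SimpleGraph V) : ℕ :=
  sSup {k | ∃ S : Finset V, (∀ x ∈ S, ∀ y ∈ S, ¬ G.Adj x y) ∧ S.card = k}

/-- `S` is irredundant: every `x ∈ S` has a private neighbor w.r.t. `S`. -/
def Irredundant (G : SimpleGraph V) (S : Finset V) : Prop :=
  ∀ x ∈ S, ∃ w, (∃ v ∈ S, w ∈ cnbhd G v) ∧ ¬ ∃ v ∈ S.erase x, w ∈ cnbhd G v

/-- The upper irredundance number `IR(G)`. -/
def upperIrredNum (G : SimpleGraph V) : ℕ :=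
  sSup {k | ∃ S : Finset V, Irredundant G S ∧ (∀ T, S ⊂ T → ¬ Irredundant G T) ∧ S.card = k}

/-- The star `K_{1,n}` with center `0`. -/
def starGraph (n : ℕ) : SimpleGraph (Fin (n+1)) where
  Adj a b := a ≠ b ∧ (a = 0 ∨ b = 0)
  symm := by constructor; intro a b h; exact ⟨h.1.symm, h.2.symm⟩
  loopless := by constructor; intro a h; exact h.1 rfl

/-- Two copies of `K_n` with a matching joining corresponding vertices of
index `≥ 1` (i.e. `K_n □ K₂` minus the matching edge at index `0`). -/
def Hgraph (n : ℕ) : SimpleGraph (Fin n × Bool) where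
  Adj a b := (a.2 = b.2 ∧ a.1 ≠ b.1) ∨ (a.2 ≠ b.2 ∧ a.1 = b.1 ∧ (a.1 : ℕ) ≠ 0)
  symm := by
    constructor
    rintro ⟨i, s⟩ ⟨j, t⟩ (⟨h1, h2⟩ | ⟨h1, h2, h3⟩)
    · exact Or.inl ⟨h1.symm, h2.symm⟩
    · exact Or.inr ⟨h1.symm, h2.symm, h2 ▸ h3⟩
  loopless := by constructor; rintro ⟨i, s⟩ (⟨_, h⟩ | ⟨h, _⟩) <;> exact h rfl

/-- The `k`-th power of the path on `n` vertices: `i ~ j` iff `1 ≤ |i-j| ≤ k`. -/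
def pathPow (n k : ℕ) : SimpleGraph (Fin n) where
  Adj i j := i ≠ j ∧ (i : ℕ) ≤ (j : ℕ) + k ∧ (j : ℕ) ≤ (i : ℕ) + k
  symm := by constructor; intro i j h; exact ⟨h.1.symm, h.2.2, h.2.1⟩
  loopless := by constructor; intro i h; exact h.1 rfl

/-- The cycle on `m` vertices (for `m ≥ 3`), modeled on `ZMod m`. -/
def cyc (m : ℕ) : SimpleGraph (ZMod m) where
  Adj i j := i ≠ j ∧ (i + 1 = j ∨ j + 1 = i)
  symm := by constructor; intro i j h; exact ⟨h.1.symm, h.2.symm⟩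
  loopless := by constructor; intro i h; exact h.1 rfl

/-- The graph `D₁`: a `9`-cycle `x₁x₂…x₉` plus chords `x₁x₃, x₄x₆, x₇x₉`
(vertex `xᵢ` is represented by `i - 1 : ZMod 9`). -/
def DGraph : SimpleGraph (ZMod 9) where
  Adj i j := i ≠ j ∧ (i + 1 = j ∨ j + 1 = i ∨
    (i = 0 ∧ j = 2) ∨ (i = 2 ∧ j = 0) ∨ (i = 3 ∧ j = 5) ∨ (i = 5 ∧ j = 3) ∨
    (i = 6 ∧ j = 8) ∨ (i = 8 ∧ j = 6))
  symm := by constructor; intro i j h; refine ⟨h.1.symm, ?_⟩; tauto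
  loopless := by constructor; intro i h; exact h.1 rfl


/-
Every graph satisfies `γᵢ(G) ≤ n - δ`: Staller's first selection dominates at least `δ + 1`
vertices, and afterwards every selection dominates the indicated vertex, which was undominated.
Conversely, if `B` is a maximal independent set, Staller can always answer with a vertex of `B`
in the closed neighbourhood of the indicated vertex; such a vertex dominates no other vertex of
`B`, so the game lasts at least `|B|` moves.
-/

section

variable {G : SimpleGraph V}

lemma mem_cnbhd {u v : V} : u ∈ cnbhd G v ↔ u = v ∨ G.Adj v u := by
  simp [cnbhd]

lemma mem_cnbhd_comm {u v : V} : u ∈ cnbhd G v ↔ v ∈ cnbhd G u := by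
  simp only [mem_cnbhd, eq_comm, G.adj_comm]

lemma card_cnbhd (v : V) : (cnbhd G v).card = G.degree v + 1 := by
  rw [cnbhd, card_insert_of_notMem (by simp), G.card_neighborFinset_eq_degree]

lemma mem_undom {u : V} {D : Finset V} : u ∈ undom G D ↔ ∀ v ∈ D, u ∉ cnbhd G v := by
  simp [undom]

lemma undom_empty : undom G ∅ = univ := by
  ext u
  simp [mem_undom]

lemma undom_singleton (v : V) : undom G {v} = (cnbhd G v)ᶜ := by
  ext u
  simp [mem_undom]

lemma undom_insert_ssubset {u : V} {D : Finset V} (hu : u ∈ undom G D) {v : V}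
    (hv : v ∈ cnbhd G u) : undom G (insert v D) ⊂ undom G D := by
  refine (ssubset_iff_of_subset fun x hx => ?_).2 ⟨u, hu, ?_⟩
  · exact mem_undom.2 fun w hw => mem_undom.1 hx w (mem_insert_of_mem hw)
  · exact fun hu' => mem_undom.1 hu' v (mem_insert_self v D) (mem_cnbhd_comm.1 hv)

lemma giAux_le_card_undom (fuel : ℕ) (D : Finset V) :
    giAux G fuel D ≤ (undom G D).card := by
  induction fuel generalizing D with
  | zero => simp [giAux]
  | succ fuel ih =>
    rw [giAux]
    split_ifs with h
    · obtain ⟨u, hu⟩ := h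
      refine (inf'_le _ hu).trans (sup'_le _ _ fun v hv => ?_)
      have := card_lt_card (undom_insert_ssubset hu hv)
      have := ih (insert v D)
      omega
    · exact Nat.zero_le _

theorem indicatedDomNum_le_card_sub_minDegree :
    indicatedDomNum G ≤ Fintype.card V - G.minDegree := by
  rw [indicatedDomNum]
  rcases h : Fintype.card V with _ | m
  · simp [giAux]
  have hne : (undom G (∅ : Finset V)).Nonempty := by
    rw [undom_empty, univ_nonempty_iff, ← Fintype.card_pos_iff]
    omega
  rw [giAux, dif_pos hne]
  obtain ⟨u, hu⟩ := hne
  refine (inf'_le _ hu).trans (sup'_le _ _ fun v _ => ?_)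
  have hval : giAux G m (insert v ∅) ≤ m - G.degree v := by
    rw [insert_empty]
    simpa [undom_singleton, card_compl, card_cnbhd, h] using giAux_le_card_undom m {v}
  have := G.minDegree_le_degree v
  have := h ▸ G.degree_lt_card_verts v
  omega

lemma card_inter_undom_le_insert {B : Finset V} (hB : G.IsIndepSet B) {v : V} (hv : v ∈ B)
    (D : Finset V) : (B ∩ undom G D).card ≤ (B ∩ undom G (insert v D)).card + 1 := by
  have hsub : (B ∩ undom G D).erase v ⊆ B ∩ undom G (insert v D) := by
    intro x hx
    obtain ⟨hxv, hxB, hxD⟩ := mem_erase.1 hx |>.imp_right mem_inter.1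
    refine mem_inter.2 ⟨hxB, mem_undom.2 fun w hw => ?_⟩
    rcases mem_insert.1 hw with rfl | hw
    · rw [mem_cnbhd, not_or]
      exact ⟨hxv, hB hv hxB (Ne.symm hxv)⟩
    · exact mem_undom.1 hxD w hw
  have := card_le_card hsub
  have := pred_card_le_card_erase (s := B ∩ undom G D) (a := v)
  omega

lemma min_card_inter_undom_le_giAux {B : Finset V} (hB : G.IsIndepSet B)
    (hdom : ∀ a ∉ B, ∃ b ∈ B, G.Adj a b) (fuel : ℕ) (D : Finset V) :
    min fuel (B ∩ undom G D).card ≤ giAux G fuel D := by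
  induction fuel generalizing D with
  | zero => simp
  | succ fuel ih =>
    rcases (B ∩ undom G D).eq_empty_or_nonempty with hempty | ⟨b, hb⟩
    · simp [hempty]
    rw [giAux, dif_pos ⟨b, (mem_inter.1 hb).2⟩]
    refine le_inf' _ _ fun u _ => ?_
    obtain ⟨v, hvB, hvu⟩ : ∃ v ∈ B, v ∈ cnbhd G u := by
      by_cases huB : u ∈ B
      · exact ⟨u, huB, mem_insert_self u _⟩
      · obtain ⟨v, hvB, huv⟩ := hdom u huB
        exact ⟨v, hvB, mem_cnbhd.2 (Or.inr huv)⟩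
    refine le_trans ?_ (le_sup' _ hvu)
    have := card_inter_undom_le_insert hB hvB D
    have := ih (insert v D)
    omega

theorem card_le_indicatedDomNum {B : Finset V} (hB : G.IsIndepSet B)
    (hdom : ∀ a ∉ B, ∃ b ∈ B, G.Adj a b) : B.card ≤ indicatedDomNum G := by
  have h := min_card_inter_undom_le_giAux hB hdom (Fintype.card V) ∅
  rw [undom_empty, inter_univ, min_eq_right (card_le_univ B)] at h
  exact h

end

/-- if `G` has a spanning complete bipartite subgraph
`K_{δ, n-δ}` whose part `B` of size `n - δ` is independent in `G`,
then `γᵢ(G) = n - δ`. -/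
theorem stmt5 {V : Type*} [Fintype V] (G : SimpleGraph V) (B : Finset V)
    (hcard : B.card = Fintype.card V - G.minDegree)
    (hind : ∀ x ∈ B, ∀ y ∈ B, ¬ G.Adj x y)
    (hjoin : ∀ a ∉ B, ∀ b ∈ B, G.Adj a b) :
    indicatedDomNum G = Fintype.card V - G.minDegree := by
  have hdom : ∀ a ∉ B, ∃ b ∈ B, G.Adj a b := by
    intro a ha
    have := G.minDegree_le_degree a
    have := G.degree_lt_card_verts a
    obtain ⟨b, hb⟩ := card_pos.1 (by omega : 0 < B.card)
    exact ⟨b, hb, hjoin a ha b hb⟩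
  refine le_antisymm indicatedDomNum_le_card_sub_minDegree ?_
  exact hcard ▸ card_le_indicatedDomNum (fun x hx y hy _ => hind x hx y hy) hdom

end IndicatedDom
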